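/- arXiv:2507.01841 — 7 statements merged into one kernel-verified Lean document; each statement's English description precedes it below -/
import Mathlib

section
/- Let r be a natural number, let c, x ∈ ℝ^r be vectors, and let H ∈ ℝ^{r×r} be a symmetric matrix. Define the set function f(S) = ∑_{i∈S⁻} c_i x_i + (1/2) ∑_{i∈S⁻} ∑_{j∈S⁻} x_i H_{i,j} x_j for S ⊆ [r], where S⁻ = [r] \ S. Then f is submodular if and only if H_{i,j} x_i x_j ≤ 0 for all i, j ∈ [r] with i ≠ j. -/
/-- For vectors `c, x ∈ ℝ^r` and a symmetric matrix `H ∈ ℝ^{r×r}`,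
the set function `f(S) = ∑_{i∈S⁻} c_i x_i + (1/2) ∑_{i∈S⁻} ∑_{j∈S⁻} x_i H_{i,j} x_j`,
with `S⁻ = [r] \ S`, is submodular iff `H_{i,j} x_i x_j ≤ 0` for all `i ≠ j`. -/
theorem submodular_iff_offdiag_nonpos
    (r : ℕ) (c x : Fin r → ℝ) (H : Matrix (Fin r) (Fin r) ℝ)
    (hH : ∀ i j, H i j = H j i)
    (f : Finset (Fin r) → ℝ)
    (hf : ∀ S : Finset (Fin r),
      f S = ∑ i ∈ Sᶜ, c i * x i
        + (1 / 2) * ∑ i ∈ Sᶜ, ∑ j ∈ Sᶜ, x i * H i j * x j) :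
    (∀ X Y : Finset (Fin r), f X + f Y ≥ f (X ∪ Y) + f (X ∩ Y)) ↔
      (∀ i j : Fin r, i ≠ j → H i j * x i * x j ≤ 0) := by
  classical
  set Q : Finset (Fin r) → Finset (Fin r) → ℝ :=
    fun A B => ∑ i ∈ A, ∑ j ∈ B, x i * H i j * x j with hQ
  have hQl : ∀ A B C : Finset (Fin r), Disjoint A B →
      Q (A ∪ B) C = Q A C + Q B C := by
    intro A B C h
    simp [hQ, Finset.sum_union h]
  have hQr : ∀ A B C : Finset (Fin r), Disjoint B C →
      Q A (B ∪ C) = Q A B + Q A C := by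
    intro A B C h
    simp [hQ, Finset.sum_union h, Finset.sum_add_distrib]
  have hQs : ∀ A B : Finset (Fin r), Q A B = Q B A := by
    intro A B
    rw [hQ]
    simp only
    rw [Finset.sum_comm]
    refine Finset.sum_congr rfl fun j _ => Finset.sum_congr rfl fun i _ => ?_
    rw [hH i j]; ring
  have key : ∀ X Y : Finset (Fin r),
      f X + f Y - (f (X ∪ Y) + f (X ∩ Y)) = - Q (Xᶜ \ Yᶜ) (Yᶜ \ Xᶜ) := by
    intro X Y
    set I := Xᶜ ∩ Yᶜ with hI
    set P := Xᶜ \ Yᶜ with hP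
    set R := Yᶜ \ Xᶜ with hR
    have hIP : Disjoint I P := by
      simp [hI, hP, Finset.disjoint_left]
      tauto
    have hIR : Disjoint I R := by
      simp [hI, hR, Finset.disjoint_left]
      tauto
    have hPR : Disjoint P R := by
      simp [hP, hR, Finset.disjoint_left]
      tauto
    have hX : Xᶜ = I ∪ P := by
      rw [hI, hP]; ext a; simp; tauto
    have hY : Yᶜ = I ∪ R := by
      rw [hI, hR]; ext a; simp; tauto
    have hU : (X ∪ Y)ᶜ = I := by rw [Finset.compl_union]
    have hV : (X ∩ Y)ᶜ = (I ∪ P) ∪ R := by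
      rw [hI, hP, hR, Finset.compl_inter]; ext a; simp; tauto
    have hIPR : Disjoint (I ∪ P) R := Finset.disjoint_union_left.mpr ⟨hIR, hPR⟩
    rw [hf X, hf Y, hf (X ∪ Y), hf (X ∩ Y), hX, hY, hU, hV]
    have eL1 := Finset.sum_union (f := fun i => c i * x i) hIP
    have eL2 := Finset.sum_union (f := fun i => c i * x i) hIR
    have eL3 := Finset.sum_union (f := fun i => c i * x i) hIPR
    have e1 : ∑ i ∈ I ∪ P, ∑ j ∈ I ∪ P, x i * H i j * x j = Q (I ∪ P) (I ∪ P) := rfl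
    have e2 : ∑ i ∈ I ∪ R, ∑ j ∈ I ∪ R, x i * H i j * x j = Q (I ∪ R) (I ∪ R) := rfl
    have e3 : ∑ i ∈ I, ∑ j ∈ I, x i * H i j * x j = Q I I := rfl
    have e4 : ∑ i ∈ (I ∪ P) ∪ R, ∑ j ∈ (I ∪ P) ∪ R, x i * H i j * x j
        = Q ((I ∪ P) ∪ R) ((I ∪ P) ∪ R) := rfl
    rw [eL1, eL2, eL3, e1, e2, e3, e4]
    rw [hQl _ _ _ hIP, hQl _ _ _ hIR, hQl _ _ _ hIPR, hQl _ _ _ hIP,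
        hQr _ _ _ hIP, hQr _ _ _ hIP, hQr _ _ _ hIR, hQr _ _ _ hIR,
        hQr _ _ _ hIPR, hQr _ _ _ hIPR, hQr _ _ _ hIPR,
        hQr _ _ _ hIP, hQr _ _ _ hIP, hQr _ _ _ hIP]
    have := hQs P R
    linarith [hQs P R]
  constructor
  · intro h i j hij
    have hk := key ({i}ᶜ) ({j}ᶜ)
    have h1 : ({i}ᶜ : Finset (Fin r))ᶜ = {i} := compl_compl _
    have h2 : ({j}ᶜ : Finset (Fin r))ᶜ = {j} := compl_compl _
    rw [h1, h2] at hk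
    have h3 : ({i} : Finset (Fin r)) \ {j} = {i} := by
      ext a; simp; rintro rfl; exact hij
    have h4 : ({j} : Finset (Fin r)) \ {i} = {j} := by
      ext a; simp; rintro rfl; exact hij.symm
    rw [h3, h4] at hk
    have hQij : Q {i} {j} = x i * H i j * x j := by simp [hQ]
    have hle := h ({i}ᶜ) ({j}ᶜ)
    have : x i * H i j * x j ≤ 0 := by
      rw [hQij] at hk; linarith
    nlinarith [this]
  · intro h X Y
    have hk := key X Y
    have hQle : Q (Xᶜ \ Yᶜ) (Yᶜ \ Xᶜ) ≤ 0 := by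
      apply Finset.sum_nonpos
      intro i hi
      apply Finset.sum_nonpos
      intro j hj
      have hij : i ≠ j := by
        intro hij
        rw [Finset.mem_sdiff] at hi hj
        exact hi.2 (hij ▸ hj.1)
      have := h i j hij
      nlinarith [this]
    linarith
end

section
/- Let r be a natural number, let c, x ∈ ℝ^r be vectors, and let H ∈ ℝ^{r×r} be a symmetric matrix satisfying H_{i,j} x_i x_j ≤ 0 for all i ≠ j. Define f(S) = ∑_{i∈S⁻} c_i x_i + (1/2) ∑_{i∈S⁻} ∑_{j∈S⁻} x_i H_{i,j} x_j, where S⁻ = [r] \ S. Then for all X, Y ⊆ [r], f(X) + f(Y) ≥ f(X ∪ Y) + f(X ∩ Y). -/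
/-- If `H` is symmetric with `H_{i,j} x_i x_j ≤ 0` for all `i ≠ j`, then
`f(S) = ∑_{i∈S⁻} c_i x_i + (1/2) ∑_{i∈S⁻} ∑_{j∈S⁻} x_i H_{i,j} x_j` is submodular. -/
theorem submodular_of_offdiag_nonpos
    (r : ℕ) (c x : Fin r → ℝ) (H : Matrix (Fin r) (Fin r) ℝ)
    (hH : ∀ i j, H i j = H j i)
    (hcond : ∀ i j : Fin r, i ≠ j → H i j * x i * x j ≤ 0)
    (f : Finset (Fin r) → ℝ)
    (hf : ∀ S : Finset (Fin r),
      f S = ∑ i ∈ Sᶜ, c i * x i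
        + (1 / 2) * ∑ i ∈ Sᶜ, ∑ j ∈ Sᶜ, x i * H i j * x j) :
    ∀ X Y : Finset (Fin r), f X + f Y ≥ f (X ∪ Y) + f (X ∩ Y) := by
  intro X Y
  rw [hf, hf, hf, hf, Finset.compl_union, Finset.compl_inter]
  set A := Xᶜ with hA
  set B := Yᶜ with hB
  set q : Fin r → Fin r → ℝ := fun i j => x i * H i j * x j with hqdef
  have hq : ∀ i j, i ≠ j → q i j ≤ 0 := by
    intro i j hij
    have h := hcond i j hij
    simp only [hqdef]
    nlinarith [h]
  have hlin : ∑ i ∈ A ∪ B, c i * x i + ∑ i ∈ A ∩ B, c i * x i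
      = ∑ i ∈ A, c i * x i + ∑ i ∈ B, c i * x i := Finset.sum_union_inter
  have conv1 : ∀ (S : Finset (Fin r)) (g : Fin r → ℝ),
      ∑ i ∈ S, g i = ∑ i ∈ Finset.univ, (if i ∈ S then (1:ℝ) else 0) * g i := by
    intro S g
    simp [ite_mul, Finset.sum_ite_mem]
  have conv : ∀ (S : Finset (Fin r)),
      ∑ i ∈ S, ∑ j ∈ S, q i j
        = ∑ i ∈ Finset.univ, ∑ j ∈ Finset.univ,
            ((if i ∈ S then (1:ℝ) else 0) * (if j ∈ S then (1:ℝ) else 0)) * q i j := by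
    intro S
    rw [conv1 S]
    refine Finset.sum_congr rfl fun i _ => ?_
    rw [conv1 S fun j => q i j, Finset.mul_sum]
    exact Finset.sum_congr rfl fun j _ => by ring
  have key : ∑ i ∈ A ∪ B, ∑ j ∈ A ∪ B, q i j + ∑ i ∈ A ∩ B, ∑ j ∈ A ∩ B, q i j
      ≤ ∑ i ∈ A, ∑ j ∈ A, q i j + ∑ i ∈ B, ∑ j ∈ B, q i j := by
    rw [conv, conv, conv, conv, ← Finset.sum_add_distrib, ← Finset.sum_add_distrib]
    refine Finset.sum_le_sum fun i _ => ?_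
    rw [← Finset.sum_add_distrib, ← Finset.sum_add_distrib]
    refine Finset.sum_le_sum fun j _ => ?_
    by_cases hij : i = j
    · subst hij
      by_cases h1 : i ∈ A <;> by_cases h2 : i ∈ B <;>
        simp [h1, h2, Finset.mem_union, Finset.mem_inter]
    · have h := hq i j hij
      by_cases h1 : i ∈ A <;> by_cases h2 : i ∈ B <;>
        by_cases h3 : j ∈ A <;> by_cases h4 : j ∈ B <;>
        simp [h1, h2, h3, h4, Finset.mem_union, Finset.mem_inter] <;> linarith
  linarith [hlin, key]
end

section
/- Let r be a natural number, let c, x ∈ ℝ^r be vectors, and let H ∈ ℝ^{r×r} be a symmetric matrix. Define f(S) = ∑_{i∈S⁻} c_i x_i + (1/2) ∑_{i∈S⁻} ∑_{j∈S⁻} x_i H_{i,j} x_j, where S⁻ = [r] \ S. If f is submodular, then for every pair of distinct indices i, j ∈ [r], taking X = [r] \ {i} and Y = [r] \ {j} in the submodularity inequality yields H_{i,j} x_i x_j ≤ 0. -/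
/-- If the quadratic set function
`f(S) = ∑_{i∈S⁻} c_i x_i + (1/2) ∑_{i∈S⁻} ∑_{j∈S⁻} x_i H_{i,j} x_j` is submodular, then for
every pair of distinct indices `i ≠ j`, instantiating the submodularity inequality at
`X = [r] \ {i}` and `Y = [r] \ {j}` yields `H_{i,j} x_i x_j ≤ 0`. -/
theorem offdiag_nonpos_of_submodular
    (r : ℕ) (c x : Fin r → ℝ) (H : Matrix (Fin r) (Fin r) ℝ)
    (hH : ∀ i j, H i j = H j i)
    (f : Finset (Fin r) → ℝ)
    (hf : ∀ S : Finset (Fin r),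
      f S = ∑ i ∈ Sᶜ, c i * x i
        + (1 / 2) * ∑ i ∈ Sᶜ, ∑ j ∈ Sᶜ, x i * H i j * x j)
    (hsub : ∀ X Y : Finset (Fin r), f X + f Y ≥ f (X ∪ Y) + f (X ∩ Y)) :
    ∀ i j : Fin r, i ≠ j →
      (f ({i}ᶜ : Finset (Fin r)) + f ({j}ᶜ : Finset (Fin r)) ≥
        f (({i}ᶜ : Finset (Fin r)) ∪ ({j}ᶜ : Finset (Fin r))) +
          f (({i}ᶜ : Finset (Fin r)) ∩ ({j}ᶜ : Finset (Fin r)))) ∧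
      H i j * x i * x j ≤ 0 := by
  intro i j hij
  refine ⟨hsub _ _, ?_⟩
  have h := hsub ({i}ᶜ) ({j}ᶜ)
  have hu : (({i}ᶜ : Finset (Fin r)) ∪ {j}ᶜ)ᶜ = (∅ : Finset (Fin r)) := by
    rw [Finset.compl_union, compl_compl, compl_compl]
    ext a; simp only [Finset.mem_inter, Finset.mem_singleton, Finset.notMem_empty, iff_false]
    rintro ⟨rfl, rfl⟩; exact hij rfl
  have hi : (({i}ᶜ : Finset (Fin r)) ∩ {j}ᶜ)ᶜ = ({i, j} : Finset (Fin r)) := by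
    rw [Finset.compl_inter, compl_compl, compl_compl, ← Finset.insert_eq]
  rw [hf, hf, hf, hf, hu, hi, compl_compl, compl_compl] at h
  simp only [Finset.sum_singleton, Finset.sum_empty, Finset.sum_pair hij] at h
  rw [hH i j] at h ⊢
  linarith [h]
end

section
/- Let r be a natural number, let c, x ∈ ℝ^r, and let H ∈ ℝ^{r×r} be a symmetric matrix. Define the projected matrix G ∈ ℝ^{r×r} entrywise by G_{i,j} = H_{i,j} if i = j or H_{i,j} x_i x_j ≥ 0, and G_{i,j} = 0 otherwise. Then the set function f(S) = ∑_{i∈S⁻} c_i x_i - (1/2) ∑_{i∈S⁻} ∑_{j∈S⁻} x_i G_{i,j} x_j, where S⁻ = [r] \ S, is submodular: f(X) + f(Y) ≥ f(X ∪ Y) + f(X ∩ Y) for all X, Y ⊆ [r]. -/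
set_option maxHeartbeats 1000000

/-- With the projected matrix `G` (entrywise `G_{i,j} = H_{i,j}` if `i = j`
or `H_{i,j} x_i x_j ≥ 0`, else `0`), the set function
`f(S) = ∑_{i∈S⁻} c_i x_i - (1/2) ∑_{i∈S⁻} ∑_{j∈S⁻} x_i G_{i,j} x_j` is submodular. -/
theorem projected_objective_submodular
    (r : ℕ) (c x : Fin r → ℝ) (H : Matrix (Fin r) (Fin r) ℝ)
    (hH : ∀ i j, H i j = H j i)
    (G : Matrix (Fin r) (Fin r) ℝ)
    (hG : ∀ i j, G i j = if i = j ∨ 0 ≤ H i j * x i * x j then H i j else 0)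
    (f : Finset (Fin r) → ℝ)
    (hf : ∀ S : Finset (Fin r),
      f S = ∑ i ∈ Sᶜ, c i * x i
        - (1 / 2) * ∑ i ∈ Sᶜ, ∑ j ∈ Sᶜ, x i * G i j * x j) :
    ∀ X Y : Finset (Fin r), f X + f Y ≥ f (X ∪ Y) + f (X ∩ Y) := by
  classical
  have hq : ∀ i j : Fin r, i ≠ j → 0 ≤ x i * G i j * x j := by
    intro i j hij
    rw [hG]
    simp only [hij, false_or]
    split_ifs with h
    · nlinarith [h]
    · simp
  -- indicator rewriting
  have h1 : ∀ (S : Finset (Fin r)) (g : Fin r → ℝ),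
      ∑ i ∈ S, g i = ∑ i : Fin r, (if i ∈ S then (1:ℝ) else 0) * g i := by
    intro S g
    simp [ite_mul, Finset.sum_ite_mem]
  have key : ∀ S : Finset (Fin r),
      ∑ i ∈ S, ∑ j ∈ S, x i * G i j * x j
        = ∑ i : Fin r, ∑ j : Fin r,
            ((if i ∈ S then (1:ℝ) else 0) * (if j ∈ S then (1:ℝ) else 0))
              * (x i * G i j * x j) := by
    intro S
    rw [h1 S]
    refine Finset.sum_congr rfl fun i _ => ?_
    rw [h1 S, Finset.mul_sum]
    refine Finset.sum_congr rfl fun j _ => ?_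
    ring
  intro X Y
  rw [hf X, hf Y, hf (X ∪ Y), hf (X ∩ Y), Finset.compl_union, Finset.compl_inter]
  set A := Xᶜ with hA
  set B := Yᶜ with hB
  have hlin : ∑ i ∈ A ∪ B, c i * x i + ∑ i ∈ A ∩ B, c i * x i
      = ∑ i ∈ A, c i * x i + ∑ i ∈ B, c i * x i := Finset.sum_union_inter
  have main : ∑ i ∈ A, ∑ j ∈ A, x i * G i j * x j
      + ∑ i ∈ B, ∑ j ∈ B, x i * G i j * x j
      ≤ ∑ i ∈ A ∪ B, ∑ j ∈ A ∪ B, x i * G i j * x j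
      + ∑ i ∈ A ∩ B, ∑ j ∈ A ∩ B, x i * G i j * x j := by
    rw [key A, key B, key (A ∪ B), key (A ∩ B),
      ← Finset.sum_add_distrib, ← Finset.sum_add_distrib]
    refine Finset.sum_le_sum fun i _ => ?_
    rw [← Finset.sum_add_distrib, ← Finset.sum_add_distrib]
    refine Finset.sum_le_sum fun j _ => ?_
    by_cases hiA : i ∈ A <;> by_cases hiB : i ∈ B <;>
      by_cases hjA : j ∈ A <;> by_cases hjB : j ∈ B <;>
      simp [Finset.mem_union, Finset.mem_inter, hiA, hiB, hjA, hjB] <;>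
      exact hq i j (by rintro rfl; simp_all)
  linarith
end

section
/- Let r be a natural number, let x ∈ ℝ^r, and let H ∈ ℝ^{r×r} be a symmetric positive semidefinite matrix (the Hessian at a point satisfying the second-order necessary optimality conditions). Define the projected matrix G ∈ ℝ^{r×r} entrywise by G_{i,j} = H_{i,j} if i = j or H_{i,j} x_i x_j ≥ 0, and G_{i,j} = 0 otherwise. Then the set function f(S) = -(1/2) ∑_{i∈S⁻} ∑_{j∈S⁻} x_i G_{i,j} x_j, where S⁻ = [r] \ S, is monotone: for all S ⊆ T ⊆ [r], f(S) ≤ f(T). -/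
/-- If `H` is symmetric positive semidefinite and `G` is its projection
(`G_{i,j} = H_{i,j}` if `i = j` or `H_{i,j} x_i x_j ≥ 0`, else `0`), then
`f(S) = -(1/2) ∑_{i∈S⁻} ∑_{j∈S⁻} x_i G_{i,j} x_j` is monotone. -/
theorem projected_objective_monotone
    (r : ℕ) (x : Fin r → ℝ) (H : Matrix (Fin r) (Fin r) ℝ)
    (hH : ∀ i j, H i j = H j i)
    (hPSD : ∀ v : Fin r → ℝ, 0 ≤ ∑ i : Fin r, ∑ j : Fin r, v i * H i j * v j)
    (G : Matrix (Fin r) (Fin r) ℝ)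
    (hG : ∀ i j, G i j = if i = j ∨ 0 ≤ H i j * x i * x j then H i j else 0)
    (f : Finset (Fin r) → ℝ)
    (hf : ∀ S : Finset (Fin r),
      f S = -(1 / 2) * ∑ i ∈ Sᶜ, ∑ j ∈ Sᶜ, x i * G i j * x j) :
    ∀ S T : Finset (Fin r), S ⊆ T → f S ≤ f T := by
  -- diagonal entries of H are nonnegative
  have hdiag : ∀ i : Fin r, 0 ≤ H i i := by
    intro i
    have := hPSD (Pi.single i 1)
    simpa [Pi.single_apply, Finset.sum_ite_eq', Finset.mul_sum] using this
  -- each term is nonnegative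
  have hterm : ∀ i j : Fin r, 0 ≤ x i * G i j * x j := by
    intro i j
    rw [hG]
    by_cases h : i = j ∨ 0 ≤ H i j * x i * x j
    · rw [if_pos h]
      rcases h with h | h
      · subst h
        have : x i * H i i * x i = H i i * (x i * x i) := by ring
        rw [this]
        exact mul_nonneg (hdiag i) (mul_self_nonneg _)
      · have : x i * H i j * x j = H i j * x i * x j := by ring
        rw [this]; exact h
    · rw [if_neg h]; simp
  intro S T hST
  rw [hf S, hf T]
  have hsub : Tᶜ ⊆ Sᶜ := Finset.compl_subset_compl.mpr hST
  have hsum : ∑ i ∈ Tᶜ, ∑ j ∈ Tᶜ, x i * G i j * x j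
      ≤ ∑ i ∈ Sᶜ, ∑ j ∈ Sᶜ, x i * G i j * x j := by
    apply le_trans (Finset.sum_le_sum (fun i _ =>
      Finset.sum_le_sum_of_subset_of_nonneg hsub (fun j _ _ => hterm i j)))
    exact Finset.sum_le_sum_of_subset_of_nonneg hsub
      (fun i _ _ => Finset.sum_nonneg fun j _ => hterm i j)
  nlinarith [hsum]
end

section
/- Let r be a natural number, let x ∈ ℝ^r, and let H ∈ ℝ^{r×r} be a symmetric positive semidefinite matrix. Define the projected matrix G ∈ ℝ^{r×r} entrywise by G_{i,j} = H_{i,j} if i = j or H_{i,j} x_i x_j ≥ 0, and G_{i,j} = 0 otherwise. Then the set function f(S) = -(1/2) ∑_{i∈S⁻} ∑_{j∈S⁻} x_i G_{i,j} x_j, where S⁻ = [r] \ S, is both submodular (f(X) + f(Y) ≥ f(X ∪ Y) + f(X ∩ Y) for all X, Y ⊆ [r]) and monotone (S ⊆ T implies f(S) ≤ f(T)). -/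
/-- If `H` is symmetric positive semidefinite and `G` is its projection
(`G_{i,j} = H_{i,j}` if `i = j` or `H_{i,j} x_i x_j ≥ 0`, else `0`), then
`f(S) = -(1/2) ∑_{i∈S⁻} ∑_{j∈S⁻} x_i G_{i,j} x_j` is both submodular and monotone. -/
theorem projected_objective_submodular_and_monotone
    (r : ℕ) (x : Fin r → ℝ) (H : Matrix (Fin r) (Fin r) ℝ)
    (hH : ∀ i j, H i j = H j i)
    (hPSD : ∀ v : Fin r → ℝ, 0 ≤ ∑ i : Fin r, ∑ j : Fin r, v i * H i j * v j)
    (G : Matrix (Fin r) (Fin r) ℝ)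
    (hG : ∀ i j, G i j = if i = j ∨ 0 ≤ H i j * x i * x j then H i j else 0)
    (f : Finset (Fin r) → ℝ)
    (hf : ∀ S : Finset (Fin r),
      f S = -(1 / 2) * ∑ i ∈ Sᶜ, ∑ j ∈ Sᶜ, x i * G i j * x j) :
    (∀ X Y : Finset (Fin r), f X + f Y ≥ f (X ∪ Y) + f (X ∩ Y)) ∧
    (∀ S T : Finset (Fin r), S ⊆ T → f S ≤ f T) := by
  -- diagonal entries of H are nonnegative
  have hdiag : ∀ i, 0 ≤ H i i := by
    intro i
    have := hPSD (fun k => if k = i then 1 else 0)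
    simpa using this
  -- every term x i * G i j * x j is nonnegative
  have hg : ∀ i j, 0 ≤ x i * G i j * x j := by
    intro i j
    rw [hG]
    by_cases h : i = j ∨ 0 ≤ H i j * x i * x j
    · rw [if_pos h]
      rcases h with h | h
      · subst h; nlinarith [mul_nonneg (hdiag i) (sq_nonneg (x i))]
      · nlinarith
    · rw [if_neg h]; simp
  -- key combinatorial inequality for nonnegative kernels
  have key : ∀ A B : Finset (Fin r),
      (∑ i ∈ A, ∑ j ∈ A, x i * G i j * x j) + (∑ i ∈ B, ∑ j ∈ B, x i * G i j * x j)
      ≤ (∑ i ∈ A ∪ B, ∑ j ∈ A ∪ B, x i * G i j * x j)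
        + (∑ i ∈ A ∩ B, ∑ j ∈ A ∩ B, x i * G i j * x j) := by
    intro A B
    have expand : ∀ C : Finset (Fin r),
        (∑ i ∈ C, ∑ j ∈ C, x i * G i j * x j)
        = ∑ i : Fin r, ∑ j : Fin r,
            (if i ∈ C ∧ j ∈ C then x i * G i j * x j else 0) := by
      intro C
      symm
      calc ∑ i : Fin r, ∑ j : Fin r, (if i ∈ C ∧ j ∈ C then x i * G i j * x j else 0)
          = ∑ i : Fin r, (if i ∈ C then
              ∑ j : Fin r, (if j ∈ C then x i * G i j * x j else 0) else 0) := by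
            refine Finset.sum_congr rfl fun i _ => ?_
            by_cases hi : i ∈ C <;> simp [hi]
        _ = ∑ i ∈ C, ∑ j ∈ C, x i * G i j * x j := by
            rw [Finset.sum_ite_mem, Finset.univ_inter]
            exact Finset.sum_congr rfl fun i _ => by
              rw [Finset.sum_ite_mem, Finset.univ_inter]
    rw [expand A, expand B, expand (A ∪ B), expand (A ∩ B),
      ← Finset.sum_add_distrib, ← Finset.sum_add_distrib]
    refine Finset.sum_le_sum fun i _ => ?_
    rw [← Finset.sum_add_distrib, ← Finset.sum_add_distrib]
    refine Finset.sum_le_sum fun j _ => ?_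
    by_cases hiA : i ∈ A <;> by_cases hiB : i ∈ B <;>
      by_cases hjA : j ∈ A <;> by_cases hjB : j ∈ B <;>
      simp [hiA, hiB, hjA, hjB] <;> linarith [hg i j]
  constructor
  · intro X Y
    have h := key Xᶜ Yᶜ
    rw [hf X, hf Y, hf (X ∪ Y), hf (X ∩ Y), Finset.compl_union, Finset.compl_inter]
    have hu : Xᶜ ∪ Yᶜ = Xᶜ ∪ Yᶜ := rfl
    linarith [h]
  · intro S T hST
    have hsub : Tᶜ ⊆ Sᶜ := Finset.compl_subset_compl.mpr hST
    have h1 : (∑ i ∈ Tᶜ, ∑ j ∈ Tᶜ, x i * G i j * x j)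
        ≤ (∑ i ∈ Sᶜ, ∑ j ∈ Sᶜ, x i * G i j * x j) := by
      calc (∑ i ∈ Tᶜ, ∑ j ∈ Tᶜ, x i * G i j * x j)
          ≤ (∑ i ∈ Tᶜ, ∑ j ∈ Sᶜ, x i * G i j * x j) := by
            refine Finset.sum_le_sum fun i _ => ?_
            exact Finset.sum_le_sum_of_subset_of_nonneg hsub fun j _ _ => hg i j
        _ ≤ (∑ i ∈ Sᶜ, ∑ j ∈ Sᶜ, x i * G i j * x j) := by
            refine Finset.sum_le_sum_of_subset_of_nonneg hsub fun i _ _ => ?_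
            exact Finset.sum_nonneg fun j _ => hg i j
    rw [hf S, hf T]
    linarith
end

section
/- Let r, b be natural numbers with b ≤ r, and let f : 2^{[r]} → ℝ be a nonnegative, monotone, submodular set function. Let S_0, S_1, …, S_b be the sets produced by the greedy algorithm: S_0 = ∅, and for each k < b there is an element e_k ∉ S_k with S_{k+1} = S_k ∪ {e_k} such that f(S_k ∪ {e_k}) ≥ f(S_k ∪ {j}) for every j ∉ S_k. Then for every set T ⊆ [r] with |T| ≤ b, f(S_b) ≥ (1 − 1/e) · f(T), where e is Euler's number; in particular f(S_b) ≥ (1 − 1/e) · f(S*) for any optimal solution S* of maximizing f subject to the cardinality constraint |S| ≤ b. -/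
/-!
At every greedy step, submodularity bounds the gain of adding all of `T` by the sum of the
single-element gains, each at most the greedy gain, so `f T ≤ f Sₖ + b · (f Sₖ₊₁ - f Sₖ)`.
Hence the gap `f T - f Sₖ` shrinks by a factor `1 - 1/b` per step, and after `b` steps it is
at most `(1 - 1/b)ᵇ · f T ≤ f T / e`.
-/

open Finset Real

section Submodular

variable {α : Type*} [DecidableEq α] {f : Finset α → ℝ}

theorem submodular_le_add_sum_marginal
    (hsub : ∀ X Y : Finset α, f X + f Y ≥ f (X ∪ Y) + f (X ∩ Y)) (S A : Finset α) :
    f (S ∪ A) ≤ f S + ∑ j ∈ A, (f (insert j S) - f S) := by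
  induction A using Finset.induction_on with
  | empty => simp
  | insert a A ha ih =>
    have hunion : S ∪ insert a A = insert a S ∪ (S ∪ A) := by
      ext x; simp only [mem_union, mem_insert]; tauto
    have hinter : insert a S ∩ (S ∪ A) = S := by
      ext x; simp only [mem_inter, mem_insert, mem_union]
      constructor
      · rintro ⟨rfl | hx, hx' | hx'⟩ <;> first | assumption | exact absurd hx' ha
      · tauto
    have := hsub (insert a S) (S ∪ A)
    rw [hinter] at this
    rw [hunion, sum_insert ha]
    linarith

theorem le_add_mul_greedy_gain
    (hmono : ∀ X Y : Finset α, X ⊆ Y → f X ≤ f Y)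
    (hsub : ∀ X Y : Finset α, f X + f Y ≥ f (X ∪ Y) + f (X ∩ Y))
    {S T : Finset α} {e : α} (hmax : ∀ j, j ∉ S → f (insert j S) ≤ f (insert e S))
    {n : ℕ} (hT : T.card ≤ n) :
    f T ≤ f S + n * (f (insert e S) - f S) := by
  have hgain : 0 ≤ f (insert e S) - f S := sub_nonneg.2 (hmono _ _ (subset_insert e S))
  have hmarginal : ∀ j ∈ T, f (insert j S) - f S ≤ f (insert e S) - f S := by
    intro j _
    by_cases hj : j ∈ S
    · rwa [insert_eq_of_mem hj, sub_self]
    · exact sub_le_sub_right (hmax j hj) _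
  calc f T ≤ f (S ∪ T) := hmono _ _ subset_union_right
    _ ≤ f S + ∑ j ∈ T, (f (insert j S) - f S) := submodular_le_add_sum_marginal hsub S T
    _ ≤ f S + T.card * (f (insert e S) - f S) := by
      rw [← nsmul_eq_mul]; gcongr; exact sum_le_card_nsmul _ _ _ hmarginal
    _ ≤ f S + n * (f (insert e S) - f S) := by gcongr

end Submodular

theorem one_sub_inv_exp_mul_le_of_gap_contraction {n : ℕ} (hn : 0 < n) {u : ℕ → ℝ} {a : ℝ}
    (ha : 0 ≤ a) (hu₀ : 0 ≤ u 0) (hstep : ∀ k < n, a ≤ u k + n * (u (k + 1) - u k)) :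
    (1 - 1 / exp 1) * a ≤ u n := by
  have hn' : (1 : ℝ) ≤ n := by exact_mod_cast hn
  have hc : 0 ≤ 1 - 1 / (n : ℝ) := sub_nonneg.2 (div_le_one_of_le₀ hn' (by positivity))
  have hgap : a - u n ≤ (1 - 1 / (n : ℝ)) ^ n * (a - u 0) := by
    refine le_geom (u := fun k => a - u k) hc n fun k hk => ?_
    have := hstep k hk
    have hn0 : (n : ℝ) ≠ 0 := by positivity
    field_simp
    linarith
  have hpow : (1 - 1 / (n : ℝ)) ^ n ≤ 1 / exp 1 := by
    simpa [exp_neg] using one_sub_div_pow_le_exp_neg (n := n) (t := 1) hn'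
  have : a - u n ≤ 1 / exp 1 * a :=
    calc a - u n ≤ (1 - 1 / (n : ℝ)) ^ n * a := hgap.trans (by gcongr; linarith)
      _ ≤ 1 / exp 1 * a := by gcongr
  linarith

theorem greedy_approximation_guarantee_general
    (r b : ℕ)
    (f : Finset (Fin r) → ℝ)
    (hnonneg : ∀ S : Finset (Fin r), 0 ≤ f S)
    (hmono : ∀ X Y : Finset (Fin r), X ⊆ Y → f X ≤ f Y)
    (hsub : ∀ X Y : Finset (Fin r), f X + f Y ≥ f (X ∪ Y) + f (X ∩ Y))
    (S : ℕ → Finset (Fin r)) (e : ℕ → Fin r)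
    (hS0 : S 0 = ∅)
    (hgreedy : ∀ k < b,
      e k ∉ S k ∧
      S (k + 1) = insert (e k) (S k) ∧
      ∀ j : Fin r, j ∉ S k → f (insert j (S k)) ≤ f (insert (e k) (S k))) :
    ∀ T : Finset (Fin r), T.card ≤ b →
      (1 - 1 / Real.exp 1) * f T ≤ f (S b) := by
  intro T hT
  rcases b.eq_zero_or_pos with rfl | hb
  · rw [card_eq_zero.1 (Nat.le_zero.1 hT), ← hS0]
    exact mul_le_of_le_one_left (hnonneg _) (sub_le_self _ (by positivity))
  refine one_sub_inv_exp_mul_le_of_gap_contraction (u := fun k => f (S k)) hb (hnonneg T) (hnonneg (S 0)) fun k hk => ?_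
  obtain ⟨-, hnext, hmax⟩ := hgreedy k hk
  rw [hnext]
  exact le_add_mul_greedy_gain hmono hsub hmax hT

/-- Greedy guarantee for monotone submodular maximization under a
cardinality constraint: if `f` is nonnegative, monotone and submodular, and
`S_0 = ∅, S_1, …, S_b` is a greedy sequence (at each step `k < b` the added element
`e_k ∉ S_k` maximizes the marginal gain), then for every `T` with `|T| ≤ b`,
`f(S_b) ≥ (1 - 1/e) · f(T)`; in particular this holds for any optimal solution. -/
theorem greedy_approximation_guarantee
    (r b : ℕ) (hb : b ≤ r)
    (f : Finset (Fin r) → ℝ)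
    (hnonneg : ∀ S : Finset (Fin r), 0 ≤ f S)
    (hmono : ∀ X Y : Finset (Fin r), X ⊆ Y → f X ≤ f Y)
    (hsub : ∀ X Y : Finset (Fin r), f X + f Y ≥ f (X ∪ Y) + f (X ∩ Y))
    (S : ℕ → Finset (Fin r)) (e : ℕ → Fin r)
    (hS0 : S 0 = ∅)
    (hgreedy : ∀ k < b,
      e k ∉ S k ∧
      S (k + 1) = insert (e k) (S k) ∧
      ∀ j : Fin r, j ∉ S k → f (insert j (S k)) ≤ f (insert (e k) (S k))) :
    ∀ T : Finset (Fin r), T.card ≤ b →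
      (1 - 1 / Real.exp 1) * f T ≤ f (S b) :=
  greedy_approximation_guarantee_general r b f hnonneg hmono hsub S e hS0 hgreedy
end
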